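/- For each k ∈ ℕ, consider a multilayer e-filter setting with null structure (N_k features, M layers, partitions with G_k^(m) groups at layer m, null sets H0,k^(m)) on a probability space, with nonnegative real random e-values e_{g,k}^(m) that are almost surely finite. Suppose that for each m ∈ [M], G_k^(m) → ∞ as k → ∞ and limsup_{k→∞} (1/G_k^(m)) Σ_{g∈H0,k^(m)} E[e_{g,k}^(m)] ≤ 1 (the layer-m e-values are asymptotic relaxed e-values). Let S_k be the output of the generalized e-filter at fixed levels α^(1),…,α^(M) ∈ (0,1) in the k-th setting. Then for every m ∈ [M], limsup_{k→∞} FDR_k^(m) ≤ α^(m). -/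

import Mathlib

/-!
Let `t̂` be the e-filter threshold and `D = |S^(m)(t̂)| ∨ 1`. Every admissible `u` lies above `t̂`
coordinatewise, so it selects fewer groups and its constraint `FDPhat^(m)(u) ≤ α` gives
`G ≤ α D u^(m)`; taking the infimum, `G ≤ α D t̂^(m)`. Every selected null group has e-value at
least `t̂^(m)`, so `#(selected nulls) · t̂^(m) ≤ Σ_{g null} e_g`. Together,
`FDP^(m) ≤ α · (1/G) Σ_{g null} e_g` pointwise, and taking expectations and `limsup` finishes.
Infinite e-values cause no trouble: both bounds hold in `ℝ≥0∞`, and when `t̂^(m) = ∞` the second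
one forces the count of selected nulls to vanish unless the null sum is itself infinite.
-/

open scoped ENNReal
open Filter MeasureTheory

namespace MultilayerEFilter

variable {N M : ℕ} {G : Fin M → ℕ}

/-- Candidate selection set `S(t) = {j : e_{h(m,j)}^(m) ≥ t^(m) for all m}`. -/
noncomputable def sel (h : (m : Fin M) → Fin N → Fin (G m))
    (e : (m : Fin M) → Fin (G m) → ℝ≥0∞) (t : Fin M → ℝ≥0∞) : Finset (Fin N) :=
  Finset.univ.filter fun j => ∀ m, t m ≤ e m (h m j)

/-- Induced group selection `S^(m) = {g : A_g^(m) ∩ S ≠ ∅}`. -/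
noncomputable def selGrp (A : (m : Fin M) → Fin (G m) → Finset (Fin N))
    (S : Finset (Fin N)) (m : Fin M) : Finset (Fin (G m)) :=
  Finset.univ.filter fun g => ∃ j ∈ A m g, j ∈ S

/-- Estimated FDP at layer `m`: `(G^(m)/t^(m)) / (|S^(m)(t)| ∨ 1)` (with `G/∞ = 0`). -/
noncomputable def FDPhat (A : (m : Fin M) → Fin (G m) → Finset (Fin N))
    (h : (m : Fin M) → Fin N → Fin (G m))
    (e : (m : Fin M) → Fin (G m) → ℝ≥0∞) (t : Fin M → ℝ≥0∞) (m : Fin M) : ℝ≥0∞ :=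
  ((G m : ℝ≥0∞) / t m) / ((max (selGrp A (sel h e t) m).card 1 : ℕ) : ℝ≥0∞)

/-- Admissible threshold vectors. -/
noncomputable def admissible (A : (m : Fin M) → Fin (G m) → Finset (Fin N))
    (h : (m : Fin M) → Fin N → Fin (G m))
    (e : (m : Fin M) → Fin (G m) → ℝ≥0∞) (α : Fin M → ℝ) : Set (Fin M → ℝ≥0∞) :=
  {t | (∀ m, 1 ≤ t m) ∧ ∀ m, FDPhat A h e t m ≤ ENNReal.ofReal (α m)}

/-- Threshold of the generalized e-filter: coordinatewise minimum over admissible vectors. -/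
noncomputable def filterThreshold (A : (m : Fin M) → Fin (G m) → Finset (Fin N))
    (h : (m : Fin M) → Fin N → Fin (G m))
    (e : (m : Fin M) → Fin (G m) → ℝ≥0∞) (α : Fin M → ℝ) (m : Fin M) : ℝ≥0∞ :=
  sInf {s | ∃ t ∈ admissible A h e α, t m = s}

/-- Output of the generalized e-filter. -/
noncomputable def output (A : (m : Fin M) → Fin (G m) → Finset (Fin N))
    (h : (m : Fin M) → Fin N → Fin (G m))
    (e : (m : Fin M) → Fin (G m) → ℝ≥0∞) (α : Fin M → ℝ) : Finset (Fin N) :=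
  sel h e (filterThreshold A h e α)

/-- Null groups at layer `m`: groups entirely contained in the null feature set. -/
def nullGrp (A : (m : Fin M) → Fin (G m) → Finset (Fin N))
    (H0 : Finset (Fin N)) (m : Fin M) : Finset (Fin (G m)) :=
  Finset.univ.filter fun g => A m g ⊆ H0

/-- Layer-`m` false discovery proportion of a selected feature set. -/
noncomputable def FDP (A : (m : Fin M) → Fin (G m) → Finset (Fin N))
    (H0 : Finset (Fin N)) (S : Finset (Fin N)) (m : Fin M) : ℝ≥0∞ :=
  ((selGrp A S m ∩ nullGrp A H0 m).card : ℝ≥0∞) /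
    ((max (selGrp A S m).card 1 : ℕ) : ℝ≥0∞)

end MultilayerEFilter

namespace MultilayerEFilter

section Deterministic

variable {N M : ℕ} {G : Fin M → ℕ} (A : (m : Fin M) → Fin (G m) → Finset (Fin N))
  (h : (m : Fin M) → Fin N → Fin (G m)) (e : (m : Fin M) → Fin (G m) → ℝ≥0∞)

theorem mem_sel {t : Fin M → ℝ≥0∞} {j : Fin N} : j ∈ sel h e t ↔ ∀ m, t m ≤ e m (h m j) := by
  simp [sel]

theorem mem_selGrp {S : Finset (Fin N)} {m : Fin M} {g : Fin (G m)} :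
    g ∈ selGrp A S m ↔ ∃ j ∈ A m g, j ∈ S := by
  simp [selGrp]

theorem sel_anti {t t' : Fin M → ℝ≥0∞} (htt' : ∀ m, t m ≤ t' m) : sel h e t' ⊆ sel h e t :=
  fun _ hj => (mem_sel h e).2 fun m => (htt' m).trans ((mem_sel h e).1 hj m)

theorem selGrp_mono {S S' : Finset (Fin N)} (hSS' : S ⊆ S') (m : Fin M) :
    selGrp A S m ⊆ selGrp A S' m := fun _ hg =>
  let ⟨j, hjA, hjS⟩ := (mem_selGrp A).1 hg
  (mem_selGrp A).2 ⟨j, hjA, hSS' hjS⟩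

theorem h_eq_of_mem (hdisj : ∀ m, ∀ g₁ g₂ : Fin (G m), g₁ ≠ g₂ → Disjoint (A m g₁) (A m g₂))
    (hmem : ∀ m j, j ∈ A m (h m j)) {m : Fin M} {g : Fin (G m)} {j : Fin N} (hj : j ∈ A m g) :
    h m j = g := by
  by_contra hne
  exact Finset.disjoint_left.1 (hdisj m _ _ hne) (hmem m j) hj

theorem card_selGrp_inter_mul_le_sum
    (hdisj : ∀ m, ∀ g₁ g₂ : Fin (G m), g₁ ≠ g₂ → Disjoint (A m g₁) (A m g₂))
    (hmem : ∀ m j, j ∈ A m (h m j)) (t : Fin M → ℝ≥0∞) {m : Fin M} (T : Finset (Fin (G m))) :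
    ((selGrp A (sel h e t) m ∩ T).card : ℝ≥0∞) * t m ≤ ∑ g ∈ T, e m g :=
  calc ((selGrp A (sel h e t) m ∩ T).card : ℝ≥0∞) * t m
      = ∑ _g ∈ selGrp A (sel h e t) m ∩ T, t m := by rw [Finset.sum_const, nsmul_eq_mul]
    _ ≤ ∑ g ∈ selGrp A (sel h e t) m ∩ T, e m g := Finset.sum_le_sum fun g hg => by
        obtain ⟨j, hjA, hjS⟩ := (mem_selGrp A).1 (Finset.mem_inter.1 hg).1
        simpa only [h_eq_of_mem A h hdisj hmem hjA] using (mem_sel h e).1 hjS m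
    _ ≤ ∑ g ∈ T, e m g := Finset.sum_le_sum_of_subset Finset.inter_subset_right

variable {α : Fin M → ℝ}

theorem filterThreshold_le {t : Fin M → ℝ≥0∞} (ht : t ∈ admissible A h e α) (m : Fin M) :
    filterThreshold A h e α m ≤ t m :=
  sInf_le ⟨t, ht, rfl⟩

theorem sel_subset_output {t : Fin M → ℝ≥0∞} (ht : t ∈ admissible A h e α) :
    sel h e t ⊆ output A h e α :=
  sel_anti h e (filterThreshold_le A h e ht)

theorem natCast_le_of_mem_admissible {t : Fin M → ℝ≥0∞} (ht : t ∈ admissible A h e α)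
    {m : Fin M} (hα : 0 < α m) :
    (G m : ℝ≥0∞) ≤
      ENNReal.ofReal (α m) * ((max (selGrp A (sel h e t) m).card 1 : ℕ) : ℝ≥0∞) * t m := by
  have hD : ((max (selGrp A (sel h e t) m).card 1 : ℕ) : ℝ≥0∞) ≠ 0 := by simp
  have hFDPhat := ht.2 m
  rwa [FDPhat, ENNReal.div_le_iff hD (ENNReal.natCast_ne_top _),
    ENNReal.div_le_iff_le_mul (Or.inl (zero_lt_one.trans_le (ht.1 m)).ne')
      (Or.inr (mul_ne_zero (ENNReal.ofReal_pos.2 hα).ne' hD))] at hFDPhat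

theorem natCast_le_mul_filterThreshold {m : Fin M} (hα : 0 < α m) :
    (G m : ℝ≥0∞) ≤ ENNReal.ofReal (α m) *
      ((max (selGrp A (output A h e α) m).card 1 : ℕ) : ℝ≥0∞) * filterThreshold A h e α m := by
  set c := ENNReal.ofReal (α m) * ((max (selGrp A (output A h e α) m).card 1 : ℕ) : ℝ≥0∞) with hc
  have hc0 : c ≠ 0 := mul_ne_zero (ENNReal.ofReal_pos.2 hα).ne' (by simp)
  have hctop : c ≠ ⊤ := ENNReal.mul_ne_top ENNReal.ofReal_ne_top (ENNReal.natCast_ne_top _)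
  rw [mul_comm, ← ENNReal.div_le_iff hc0 hctop]
  refine le_sInf ?_
  rintro _ ⟨t, ht, rfl⟩
  rw [ENNReal.div_le_iff hc0 hctop, mul_comm]
  calc (G m : ℝ≥0∞)
      ≤ ENNReal.ofReal (α m) * ((max (selGrp A (sel h e t) m).card 1 : ℕ) : ℝ≥0∞) * t m :=
        natCast_le_of_mem_admissible A h e ht hα
    _ ≤ c * t m := by
        rw [hc]
        gcongr
        exact selGrp_mono A (sel_subset_output A h e ht) m

theorem FDP_output_le
    (hdisj : ∀ m, ∀ g₁ g₂ : Fin (G m), g₁ ≠ g₂ → Disjoint (A m g₁) (A m g₂))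
    (hmem : ∀ m j, j ∈ A m (h m j)) (H0 : Finset (Fin N)) {m : Fin M} (hα : 0 < α m) :
    FDP A H0 (output A h e α) m ≤
      ENNReal.ofReal (α m) * ((∑ g ∈ nullGrp A H0 m, e m g) / (G m : ℝ≥0∞)) := by
  set a := ENNReal.ofReal (α m)
  set C := ((selGrp A (output A h e α) m ∩ nullGrp A H0 m).card : ℝ≥0∞)
  set D := ((max (selGrp A (output A h e α) m).card 1 : ℕ) : ℝ≥0∞)
  set E := ∑ g ∈ nullGrp A H0 m, e m g
  rcases Nat.eq_zero_or_pos (G m) with hG | hG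
  · have hcard : (selGrp A (output A h e α) m ∩ nullGrp A H0 m).card = 0 := by
      have := Finset.card_le_univ (selGrp A (output A h e α) m ∩ nullGrp A H0 m)
      rw [Fintype.card_fin] at this
      omega
    simp [FDP, hcard]
  have hCG : C * G m ≤ a * D * E :=
    calc C * G m ≤ C * (a * D * filterThreshold A h e α m) := by
          gcongr
          exact natCast_le_mul_filterThreshold A h e hα
      _ = a * D * (C * filterThreshold A h e α m) := by ring
      _ ≤ a * D * E := by
          gcongr
          exact card_selGrp_inter_mul_le_sum A h e hdisj hmem _ _
  refine ENNReal.div_le_of_le_mul ?_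
  have hrearrange : a * (E / G m) * D = a * D * E / G m := by
    simp only [div_eq_mul_inv]
    ring
  rwa [hrearrange, ENNReal.le_div_iff_mul_le (Or.inl (by exact_mod_cast hG.ne'))
    (Or.inl (ENNReal.natCast_ne_top _))]

end Deterministic

theorem lintegral_FDP_output_le {N M : ℕ} {G : Fin M → ℕ}
    (A : (m : Fin M) → Fin (G m) → Finset (Fin N)) (h : (m : Fin M) → Fin N → Fin (G m))
    (hdisj : ∀ m, ∀ g₁ g₂ : Fin (G m), g₁ ≠ g₂ → Disjoint (A m g₁) (A m g₂))
    (hmem : ∀ m j, j ∈ A m (h m j)) (H0 : Finset (Fin N)) {Ω : Type*} [MeasurableSpace Ω]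
    (P : Measure Ω) (e : Ω → (m : Fin M) → Fin (G m) → ℝ≥0∞)
    (hmeas : ∀ m g, Measurable fun ω => e ω m g) {α : Fin M → ℝ} {m : Fin M} (hα : 0 < α m) :
    ∫⁻ ω, FDP A H0 (output A h (e ω) α) m ∂P ≤
      ENNReal.ofReal (α m) * ((∑ g ∈ nullGrp A H0 m, ∫⁻ ω, e ω m g ∂P) / (G m : ℝ≥0∞)) :=
  calc ∫⁻ ω, FDP A H0 (output A h (e ω) α) m ∂P
      ≤ ∫⁻ ω, ENNReal.ofReal (α m) * (G m : ℝ≥0∞)⁻¹ * ∑ g ∈ nullGrp A H0 m, e ω m g ∂P :=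
        lintegral_mono fun ω => by
          simpa only [div_eq_mul_inv, mul_comm, mul_assoc, mul_left_comm]
            using FDP_output_le A h (e ω) hdisj hmem H0 hα
    _ = ENNReal.ofReal (α m) * ((∑ g ∈ nullGrp A H0 m, ∫⁻ ω, e ω m g ∂P) / (G m : ℝ≥0∞)) := by
        rw [lintegral_const_mul _ (Finset.measurable_sum _ fun g _ => hmeas m g),
          lintegral_finsetSum _ fun g _ => hmeas m g, div_eq_mul_inv]
        ring

theorem stmt8_general (M : ℕ) (N : ℕ → ℕ) (G : ℕ → Fin M → ℕ)
    (A : (k : ℕ) → (m : Fin M) → Fin (G k m) → Finset (Fin (N k)))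
    (h : (k : ℕ) → (m : Fin M) → Fin (N k) → Fin (G k m))
    (hdisj : ∀ k m, ∀ g₁ g₂ : Fin (G k m), g₁ ≠ g₂ → Disjoint (A k m g₁) (A k m g₂))
    (hmem : ∀ k m j, j ∈ A k m (h k m j))
    (H0 : (k : ℕ) → Finset (Fin (N k)))
    (Ω : ℕ → Type) [∀ k, MeasurableSpace (Ω k)]
    (P : (k : ℕ) → Measure (Ω k))
    (e : (k : ℕ) → Ω k → (m : Fin M) → Fin (G k m) → ℝ≥0∞)
    (hmeas : ∀ k m g, Measurable fun ω => e k ω m g)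
    (hrelax : ∀ m, Filter.limsup (fun k =>
        (∑ g ∈ nullGrp (A k) (H0 k) m, ∫⁻ ω, e k ω m g ∂ P k) / (G k m : ℝ≥0∞))
        Filter.atTop ≤ 1)
    (α : Fin M → ℝ) (hα : ∀ m, α m ∈ Set.Ioo (0 : ℝ) 1) :
    ∀ m, Filter.limsup (fun k =>
        ∫⁻ ω, FDP (A k) (H0 k) (output (A k) (h k) (e k ω) α) m ∂ P k)
        Filter.atTop ≤ ENNReal.ofReal (α m) := by
  intro m
  calc limsup (fun k => ∫⁻ ω, FDP (A k) (H0 k) (output (A k) (h k) (e k ω) α) m ∂ P k) atTop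
      ≤ limsup (fun k => ENNReal.ofReal (α m) *
          ((∑ g ∈ nullGrp (A k) (H0 k) m, ∫⁻ ω, e k ω m g ∂ P k) / (G k m : ℝ≥0∞))) atTop :=
        limsup_le_limsup (Eventually.of_forall fun k =>
          lintegral_FDP_output_le (A k) (h k) (hdisj k) (hmem k) (H0 k) (P k) (e k) (hmeas k)
            (hα m).1)
    _ = ENNReal.ofReal (α m) * limsup (fun k =>
          (∑ g ∈ nullGrp (A k) (H0 k) m, ∫⁻ ω, e k ω m g ∂ P k) / (G k m : ℝ≥0∞)) atTop :=
        ENNReal.limsup_const_mul_of_ne_top ENNReal.ofReal_ne_top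
    _ ≤ ENNReal.ofReal (α m) := mul_le_of_le_one_right' (hrelax m)

theorem stmt8 (M : ℕ) (hM : 1 ≤ M) (N : ℕ → ℕ) (G : ℕ → Fin M → ℕ)
    (A : (k : ℕ) → (m : Fin M) → Fin (G k m) → Finset (Fin (N k)))
    (h : (k : ℕ) → (m : Fin M) → Fin (N k) → Fin (G k m))
    (hne : ∀ k m g, (A k m g).Nonempty)
    (hdisj : ∀ k m, ∀ g₁ g₂ : Fin (G k m), g₁ ≠ g₂ → Disjoint (A k m g₁) (A k m g₂))
    (hmem : ∀ k m j, j ∈ A k m (h k m j))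
    (H0 : (k : ℕ) → Finset (Fin (N k)))
    (Ω : ℕ → Type) [∀ k, MeasurableSpace (Ω k)]
    (P : (k : ℕ) → Measure (Ω k)) [∀ k, IsProbabilityMeasure (P k)]
    (e : (k : ℕ) → Ω k → (m : Fin M) → Fin (G k m) → ℝ≥0∞)
    (hmeas : ∀ k m g, Measurable fun ω => e k ω m g)
    (hfin : ∀ k m g, ∀ᵐ ω ∂ P k, e k ω m g ≠ ⊤)
    (hG : ∀ m, Filter.Tendsto (fun k => G k m) Filter.atTop Filter.atTop)
    (hrelax : ∀ m, Filter.limsup (fun k =>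
        (∑ g ∈ nullGrp (A k) (H0 k) m, ∫⁻ ω, e k ω m g ∂ P k) / (G k m : ℝ≥0∞))
        Filter.atTop ≤ 1)
    (α : Fin M → ℝ) (hα : ∀ m, α m ∈ Set.Ioo (0 : ℝ) 1) :
    ∀ m, Filter.limsup (fun k =>
        ∫⁻ ω, FDP (A k) (H0 k) (output (A k) (h k) (e k ω) α) m ∂ P k)
        Filter.atTop ≤ ENNReal.ofReal (α m) :=
  stmt8_general M N G A h hdisj hmem H0 Ω P e hmeas hrelax α hα

end MultilayerEFilter
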